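/- arXiv:2412.14832 — 4 statements merged into one kernel-verified Lean document; each statement's English description precedes it below -/
import Mathlib

section
/- General variance of the k-RR frequency estimator: in the k-RR frequency-estimation setting with ε > 0, finite domain X with |X| ≥ 2, p = e^ε/(|X| − 1 + e^ε), q = 1/(|X| − 1 + e^ε), and n users with values x_1, …, x_n reporting independently via k-RR, the estimator f̂_x = (c_x/n − q)/(p − q) satisfies Var[f̂_x] = (f_x · p·(1 − p) + (1 − f_x) · q·(1 − q)) / (n · (p − q)²), where f_x = |{j : x_j = x}|/n. -/
/-!
The count `c_x` is the sum of the independent indicators `1[Y_j = x]`, which are Bernoulli with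
parameter `p` for the `n f_x` users holding `x` and `q` for the others; hence
`Var[c_x] = n f_x p (1 - p) + n (1 - f_x) q (1 - q)`. The estimator is affine in `c_x` with slope
`1 / (n (p - q))`, which gives the factor `1 / (n² (p - q)²)`.
-/

open MeasureTheory ProbabilityTheory Finset

lemma Finset.sum_ite_const {ι R : Type*} [CommRing R] (s : Finset ι) (P : ι → Prop)
    [DecidablePred P] (a b : R) :
    ∑ i ∈ s, (if P i then a else b) = #{i ∈ s | P i} * a + (#s - #{i ∈ s | P i}) * b := by
  rw [sum_ite, sum_const, sum_const, nsmul_eq_mul, nsmul_eq_mul,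
    ← card_filter_add_card_filter_not (s := s) P]
  push_cast
  ring

lemma card_filter_eq_sum_indicator {ι Ω β : Type*} [Fintype ι] [DecidableEq β]
    (Y : ι → Ω → β) (b : β) :
    (fun ω => (#{i | Y i ω = b} : ℝ)) = ∑ i, {ω | Y i ω = b}.indicator 1 := by
  ext ω
  rw [card_filter]
  push_cast
  simp [Set.indicator_apply]

namespace ProbabilityTheory

variable {Ω : Type*} [MeasurableSpace Ω] {μ : Measure Ω} [IsProbabilityMeasure μ]

lemma variance_indicator_one {s : Set Ω} (hs : MeasurableSet s) :
    Var[s.indicator 1; μ] = μ.real s * (1 - μ.real s) := by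
  have hvals : ∀ ω, s.indicator (1 : Ω → ℝ) ω = 0 ∨ s.indicator (1 : Ω → ℝ) ω = 1 := fun ω => by
    by_cases h : ω ∈ s <;> simp [h]
  rw [variance_of_ae_eq_zero_or_one (measurable_one.indicator hs).aemeasurable (ae_of_all _ hvals)]
  have hzero : {ω | s.indicator (1 : Ω → ℝ) ω = 0} = sᶜ := by
    ext ω; by_cases h : ω ∈ s <;> simp [h]
  have hone : {ω | s.indicator (1 : Ω → ℝ) ω = 1} = s := by
    ext ω; by_cases h : ω ∈ s <;> simp [h]
  rw [hzero, hone, probReal_compl_eq_one_sub hs, mul_comm]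

lemma variance_sum_indicator_one {ι : Type*} [Fintype ι] {A : ι → Set Ω}
    (hA : ∀ i, MeasurableSet (A i))
    (hindep : iIndepFun (fun i => (A i).indicator (1 : Ω → ℝ)) μ) :
    Var[∑ i, (A i).indicator 1; μ] = ∑ i, μ.real (A i) * (1 - μ.real (A i)) := by
  rw [IndepFun.variance_sum (X := fun i => (A i).indicator 1)
    (fun i _ => memLp_indicator_const 2 (hA i) 1 (Or.inr (measure_ne_top μ _)))
    (fun i _ j _ hij => hindep.indepFun hij)]
  exact sum_congr rfl fun i _ => variance_indicator_one (hA i)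

lemma variance_div_sub_div {X : Ω → ℝ} (hX : AEStronglyMeasurable X μ) (a b c : ℝ) :
    Var[fun ω => (X ω / a - b) / c; μ] = Var[X; μ] / (a * c) ^ 2 := by
  have haffine : (fun ω => (X ω / a - b) / c) = fun ω => (a * c)⁻¹ * X ω + -(b / c) := by
    ext ω
    rw [mul_inv]
    ring
  rw [haffine, variance_add_const (hX.const_mul _), variance_const_mul, inv_pow, inv_mul_eq_div]

section Count

variable {ι β : Type*} [Fintype ι] [DecidableEq β] [MeasurableSpace β]
  [MeasurableSingletonClass β] {Y : ι → Ω → β}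

lemma measurable_card_filter_eq (hY : ∀ i, Measurable (Y i)) (b : β) :
    Measurable fun ω => (#{i | Y i ω = b} : ℝ) := by
  rw [card_filter_eq_sum_indicator, sum_fn]
  exact measurable_sum _ fun i _ => measurable_one.indicator (hY i (measurableSet_singleton b))

lemma iIndepFun.variance_card_filter_eq (hY : ∀ i, Measurable (Y i)) (hindep : iIndepFun Y μ)
    (b : β) :
    Var[fun ω => (#{i | Y i ω = b} : ℝ); μ]
      = ∑ i, μ.real {ω | Y i ω = b} * (1 - μ.real {ω | Y i ω = b}) := by
  rw [card_filter_eq_sum_indicator]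
  exact variance_sum_indicator_one (fun i => hY i (measurableSet_singleton b))
    (hindep.comp (fun _ => ({b} : Set β).indicator 1)
      (fun _ => measurable_one.indicator (measurableSet_singleton b)))

end Count

end ProbabilityTheory

theorem kRR_estimator_variance_general {X : Type*} [Fintype X] [DecidableEq X]
    [MeasurableSpace X] [MeasurableSingletonClass X]
    (ε : ℝ) (hX : 2 ≤ Fintype.card X)
    (p q : ℝ)
    (hp : p = Real.exp ε / ((Fintype.card X : ℝ) - 1 + Real.exp ε))
    (hq : q = 1 / ((Fintype.card X : ℝ) - 1 + Real.exp ε))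
    (n : ℕ) (xs : Fin n → X)
    {Ω : Type*} [MeasurableSpace Ω] (μ : Measure Ω) [IsProbabilityMeasure μ]
    (Y : Fin n → Ω → X) (hmeas : ∀ j, Measurable (Y j))
    (hindep : iIndepFun Y μ)
    (hdist : ∀ (j : Fin n) (y : X),
      μ {ω | Y j ω = y} = ENNReal.ofReal (if y = xs j then p else q))
    (x : X)
    (fx : ℝ) (hfx : fx = ((Finset.filter (fun j => xs j = x) Finset.univ).card : ℝ) / n) :
    variance (fun ω =>
        (((Finset.filter (fun j => Y j ω = x) Finset.univ).card : ℝ) / n - q) / (p - q)) μ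
      = (fx * p * (1 - p) + (1 - fx) * q * (1 - q)) / (n * (p - q) ^ 2) := by
  have hdenom : 0 < (Fintype.card X : ℝ) - 1 + Real.exp ε := by
    have : (2 : ℝ) ≤ Fintype.card X := by exact_mod_cast hX
    linarith [Real.exp_pos ε]
  have hprob : ∀ j, μ.real {ω | Y j ω = x} = if xs j = x then p else q := fun j => by
    have hnonneg : 0 ≤ if x = xs j then p else q := by
      split_ifs <;> simp only [hp, hq] <;> positivity
    rw [measureReal_def, hdist j x, ENNReal.toReal_ofReal hnonneg]
    simp only [eq_comm]
  rw [variance_div_sub_div (measurable_card_filter_eq hmeas x).aestronglyMeasurable,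
    hindep.variance_card_filter_eq hmeas x]
  simp_rw [hprob, apply_ite (fun r : ℝ => r * (1 - r))]
  rw [sum_ite_const, card_univ, Fintype.card_fin, hfx]
  rcases Nat.eq_zero_or_pos n with rfl | hn
  · simp
  · field_simp

/-- General variance of the k-RR frequency estimator: with `p = e^ε/(|X| − 1 + e^ε)` and
`q = 1/(|X| − 1 + e^ε)`, if `n` users holding values `x_1, …, x_n` independently report via
k-RR, then the estimator `f̂_x = (c_x/n − q)/(p − q)` satisfies
`Var[f̂_x] = (f_x·p·(1 − p) + (1 − f_x)·q·(1 − q)) / (n·(p − q)²)`,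
where `f_x = |{j : x_j = x}|/n`. -/
theorem kRR_estimator_variance {X : Type*} [Fintype X] [DecidableEq X]
    [MeasurableSpace X] [MeasurableSingletonClass X]
    (ε : ℝ) (hε : 0 < ε) (hX : 2 ≤ Fintype.card X)
    (p q : ℝ)
    (hp : p = Real.exp ε / ((Fintype.card X : ℝ) - 1 + Real.exp ε))
    (hq : q = 1 / ((Fintype.card X : ℝ) - 1 + Real.exp ε))
    (n : ℕ) (hn : 0 < n) (xs : Fin n → X)
    {Ω : Type*} [MeasurableSpace Ω] (μ : Measure Ω) [IsProbabilityMeasure μ]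
    (Y : Fin n → Ω → X) (hmeas : ∀ j, Measurable (Y j))
    (hindep : iIndepFun Y μ)
    (hdist : ∀ (j : Fin n) (y : X),
      μ {ω | Y j ω = y} = ENNReal.ofReal (if y = xs j then p else q))
    (x : X)
    (fx : ℝ) (hfx : fx = ((Finset.filter (fun j => xs j = x) Finset.univ).card : ℝ) / n) :
    variance (fun ω =>
        (((Finset.filter (fun j => Y j ω = x) Finset.univ).card : ℝ) / n - q) / (p - q)) μ
      = (fx * p * (1 - p) + (1 - fx) * q * (1 - q)) / (n * (p - q) ^ 2) :=
  kRR_estimator_variance_general ε hX p q hp hq n xs μ Y hmeas hindep hdist x fx hfx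
end

section
/- The OUE mechanism satisfies ε-LDP: for ε > 0 and a finite domain X of size d, consider the mechanism that encodes input x ∈ X as the one-hot vector B ∈ {0,1}^d with B[x] = 1 and B[i] = 0 for i ≠ x, and outputs a random vector B' ∈ {0,1}^d whose coordinates are independent with Pr[B'[i] = 1] = 1/2 when B[i] = 1 and Pr[B'[i] = 1] = 1/(e^ε + 1) when B[i] = 0. Then for all inputs x₁, x₂ ∈ X and every output vector B' ∈ {0,1}^d, Pr[OUE(x₁) = B'] ≤ e^ε · Pr[OUE(x₂) = B']. -/
/-- Probability that the OUE mechanism on input `x` (one-hot encoding of `x` over the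
finite domain `X`, bitwise independent perturbation keeping the 1-bit with probability
`p = 1/2` and flipping each 0-bit to 1 with probability `q = 1/(e^ε + 1)`) outputs the
binary vector `B' : X → Bool`. -/
noncomputable def oueProb {X : Type*} [Fintype X] [DecidableEq X]
    (ε : ℝ) (x : X) (B' : X → Bool) : ℝ :=
  ∏ i : X,
    if i = x then (if B' i then (1 / 2 : ℝ) else 1 / 2)
    else (if B' i then 1 / (Real.exp ε + 1) else 1 - 1 / (Real.exp ε + 1))

/-!
Outside the input coordinate every bit of the output is an independent
Bernoulli(`q`) bit, and at the input coordinate it is a fair coin. Hence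
`oueProb ε x B' * Pr[bit = B' x] = (1/2) * ∏ᵢ Pr[bit = B' i]` does not depend on `x`, and
the privacy ratio reduces to the ratio of two single-bit probabilities, which is at most
`(1 - q) / q = e^ε`.
-/

section ProdUpdate

variable {ι K : Type*} [Fintype ι] [DecidableEq ι]

theorem Finset.prod_update_mul_eq {M : Type*} [CommMonoid M] (f : ι → M) (x : ι) (a : M) :
    (∏ i, Function.update f x a i) * f x = a * ∏ i, f i := by
  rw [Finset.prod_update_of_mem (Finset.mem_univ x), Finset.sdiff_singleton_eq_erase,
    ← Finset.prod_erase_mul _ f (Finset.mem_univ x), mul_assoc]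

theorem Finset.prod_update_le_mul_prod_update [Field K] [LinearOrder K] [IsStrictOrderedRing K]
    {f : ι → K} (hf : ∀ i, 0 < f i) {a c : K} (ha : 0 ≤ a) {x₁ x₂ : ι}
    (h : f x₂ ≤ c * f x₁) :
    ∏ i, Function.update f x₁ a i ≤ c * ∏ i, Function.update f x₂ a i := by
  have hP₂ : 0 ≤ ∏ i, Function.update f x₂ a i :=
    Finset.prod_nonneg fun i _ ↦ by
      rcases eq_or_ne i x₂ with rfl | hi
      · simpa using ha
      · simpa [hi] using (hf i).le
  refine le_of_mul_le_mul_right ?_ (hf x₁)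
  calc (∏ i, Function.update f x₁ a i) * f x₁
      = (∏ i, Function.update f x₂ a i) * f x₂ := by
        rw [Finset.prod_update_mul_eq, Finset.prod_update_mul_eq]
    _ ≤ (∏ i, Function.update f x₂ a i) * (c * f x₁) := mul_le_mul_of_nonneg_left h hP₂
    _ = c * (∏ i, Function.update f x₂ a i) * f x₁ := by ring

end ProdUpdate

def bernoulliProb (q : ℝ) (b : Bool) : ℝ := if b then q else 1 - q

theorem bernoulliProb_pos {q : ℝ} (hq₀ : 0 < q) (hq₁ : q < 1) (b : Bool) :
    0 < bernoulliProb q b := by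
  cases b <;> simp [bernoulliProb, hq₀, hq₁]

theorem oueProb_eq_prod_update {X : Type*} [Fintype X] [DecidableEq X]
    (ε : ℝ) (x : X) (B' : X → Bool) :
    oueProb ε x B' =
      ∏ i, Function.update (fun j ↦ bernoulliProb (1 / (Real.exp ε + 1)) (B' j)) x (1 / 2) i := by
  refine Finset.prod_congr rfl fun i _ ↦ ?_
  rw [Function.update_apply, ite_self]
  rfl

theorem bernoulliProb_le_exp_mul {ε : ℝ} (hε : 0 ≤ ε) (b b' : Bool) :
    bernoulliProb (1 / (Real.exp ε + 1)) b ≤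
      Real.exp ε * bernoulliProb (1 / (Real.exp ε + 1)) b' := by
  have hexp : 1 ≤ Real.exp ε := Real.one_le_exp hε
  have hq : 0 < 1 / (Real.exp ε + 1) := by positivity
  have hflip : 1 - 1 / (Real.exp ε + 1) = Real.exp ε * (1 / (Real.exp ε + 1)) := by
    field_simp; ring
  cases b <;> cases b' <;> simp only [bernoulliProb, Bool.false_eq_true, if_true, if_false, hflip]
    <;> nlinarith [mul_nonneg (sub_nonneg.2 hexp) hq.le,
      mul_nonneg (sub_nonneg.2 hexp) (mul_pos (Real.exp_pos ε) hq).le]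

/-- The OUE mechanism satisfies ε-LDP: for all inputs `x₁, x₂` and every output vector
`B' ∈ {0,1}^d`, `Pr[OUE(x₁) = B'] ≤ e^ε · Pr[OUE(x₂) = B']`. -/
theorem oue_satisfies_LDP {X : Type*} [Fintype X] [DecidableEq X]
    (ε : ℝ) (hε : 0 < ε) (x₁ x₂ : X) (B' : X → Bool) :
    oueProb ε x₁ B' ≤ Real.exp ε * oueProb ε x₂ B' := by
  have hq₁ : 1 / (Real.exp ε + 1) < 1 := by
    rw [div_lt_one (by positivity)]
    linarith [Real.exp_pos ε]
  rw [oueProb_eq_prod_update, oueProb_eq_prod_update]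
  exact Finset.prod_update_le_mul_prod_update
    (fun i ↦ bernoulliProb_pos (by positivity) hq₁ (B' i)) (by norm_num)
    (bernoulliProb_le_exp_mul hε.le (B' x₂) (B' x₁))
end

section
/- The OLH mechanism satisfies ε-LDP: let ε > 0, let d' ≥ 2 be an integer, and let 𝓗 be a finite nonempty family of functions H : X → Fin d'. Consider the mechanism that, on input x ∈ X, samples H uniformly at random from 𝓗, applies k-RR on the domain Fin d' (with p = e^ε/(d' − 1 + e^ε), q = 1/(d' − 1 + e^ε)) to v = H(x) to obtain y, and outputs the pair (H, y). Then for all x, x' ∈ X and every output pair (H₀, y₀) ∈ 𝓗 × Fin d', Pr[OLH(x) = (H₀, y₀)] ≤ e^ε · Pr[OLH(x') = (H₀, y₀)]. -/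
/-!
The hash function is drawn independently of the input, so both sides carry the same factor
`1/|𝓗|`, and what remains is the likelihood ratio of k-ary randomized response on the hashed
value, which is at most `p/q = e^ε`.
-/

lemma ite_le_mul_ite_of_eq_mul {p q c : ℝ} (hq : 0 ≤ q) (hc : 1 ≤ c) (hpq : p = c * q)
    (a b : Prop) [Decidable a] [Decidable b] :
    (if a then p else q) ≤ c * (if b then p else q) := by
  have hp : 0 ≤ p := hpq ▸ mul_nonneg (zero_le_one.trans hc) hq
  have hqp : q ≤ p := hpq ▸ le_mul_of_one_le_left hq hc
  split_ifs
  · exact le_mul_of_one_le_left hp hc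
  · exact hpq.le
  · exact hqp.trans (le_mul_of_one_le_left hp hc)
  · exact le_mul_of_one_le_left hq hc

lemma one_div_krr_denom_nonneg {ε : ℝ} (hε : 0 ≤ ε) (d : ℕ) :
    0 ≤ 1 / ((d : ℝ) - 1 + Real.exp ε) := by
  have : (1 : ℝ) ≤ Real.exp ε := Real.one_le_exp hε
  exact one_div_nonneg.mpr (by linarith [(Nat.cast_nonneg d : (0 : ℝ) ≤ d)])

theorem olh_satisfies_LDP_general {X ι : Type*} [Fintype ι]
    (ε : ℝ) (hε : 0 < ε) (d' : ℕ)
    (Hfam : ι → X → Fin d')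
    (p q : ℝ)
    (hp : p = Real.exp ε / ((d' : ℝ) - 1 + Real.exp ε))
    (hq : q = 1 / ((d' : ℝ) - 1 + Real.exp ε))
    (x x' : X) (i₀ : ι) (y₀ : Fin d') :
    (1 / (Fintype.card ι : ℝ)) * (if Hfam i₀ x = y₀ then p else q)
      ≤ Real.exp ε * ((1 / (Fintype.card ι : ℝ)) * (if Hfam i₀ x' = y₀ then p else q)) := by
  have hq0 : 0 ≤ q := hq ▸ one_div_krr_denom_nonneg hε.le d'
  have hpq : p = Real.exp ε * q := by rw [hp, hq, mul_one_div]
  rw [mul_left_comm]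
  exact mul_le_mul_of_nonneg_left
    (ite_le_mul_ite_of_eq_mul hq0 (Real.one_le_exp hε.le) hpq _ _) (by positivity)

/-- The OLH mechanism satisfies ε-LDP: with `p = e^ε/(d' − 1 + e^ε)` and
`q = 1/(d' − 1 + e^ε)`, the mechanism that samples a hash function `H` uniformly at random
from a finite nonempty family `𝓗` (indexed by `ι`), applies k-RR on `Fin d'` to `H(x)`, and
outputs the pair `(H, y)`, assigns to each output pair `(H₀, y₀)` the probability
`(1/|𝓗|)·(p if H₀(x) = y₀ else q)`; for all `x, x'` and every output pair, this probability
on input `x` is at most `e^ε` times that on input `x'`. -/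
theorem olh_satisfies_LDP {X ι : Type*} [Fintype ι] [Nonempty ι]
    (ε : ℝ) (hε : 0 < ε) (d' : ℕ) (hd' : 2 ≤ d')
    (Hfam : ι → X → Fin d')
    (p q : ℝ)
    (hp : p = Real.exp ε / ((d' : ℝ) - 1 + Real.exp ε))
    (hq : q = 1 / ((d' : ℝ) - 1 + Real.exp ε))
    (x x' : X) (i₀ : ι) (y₀ : Fin d') :
    (1 / (Fintype.card ι : ℝ)) * (if Hfam i₀ x = y₀ then p else q)
      ≤ Real.exp ε * ((1 / (Fintype.card ι : ℝ)) * (if Hfam i₀ x' = y₀ then p else q)) :=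
  olh_satisfies_LDP_general ε hε d' Hfam p q hp hq x x' i₀ y₀
end

section
/- The OLH frequency estimator is unbiased: let ε > 0, d' ≥ 2, and let 𝓗 be a finite nonempty exactly universal family of hash functions X → Fin d'. Let n users hold private values x_1, …, x_n ∈ X and each independently report (H_j, y_j) produced by OLH with p = e^ε/(d' − 1 + e^ε) and q = 1/(d' − 1 + e^ε). Fix x ∈ X, let c_x = |{j : H_j(x) = y_j}| be the number of reports supporting x, and let f_x = |{j : x_j = x}|/n. Then E[(c_x/n − 1/d')/(p − 1/d')] = f_x (where p − 1/d' = (e^ε − 1)(d' − 1)/(d'·(d' − 1 + e^ε)) > 0). -/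
/-!
By linearity of expectation only the marginal law of each report matters. A report of the
true value `x` supports `x` exactly when randomized response keeps the hash value, i.e. with
probability `p`. A report of `x' ≠ x` supports `x` when the hashes collide and the hash value
is kept, or they do not collide and randomized response lands on `H x`; by exact universality
this happens with probability `p / d' + (1 - 1 / d') q = 1 / d'`. Hence
`E[c_x / n] = f_x p + (1 - f_x) / d'`, and the estimator inverts this affine map of `f_x`.
-/

open MeasureTheory ProbabilityTheory Finset

lemma exp_div_sub_one_div_pos {ε d : ℝ} (hε : 0 < ε) (hd : 1 < d) :
    0 < Real.exp ε / (d - 1 + Real.exp ε) - 1 / d := by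
  have hexp : 1 < Real.exp ε := Real.one_lt_exp_iff.mpr hε
  have hD : 0 < d - 1 + Real.exp ε := by linarith
  have hdiff : Real.exp ε / (d - 1 + Real.exp ε) - 1 / d
      = (d - 1) * (Real.exp ε - 1) / (d * (d - 1 + Real.exp ε)) := by
    field_simp
    ring
  rw [hdiff]
  exact div_pos (mul_pos (by linarith) (by linarith)) (mul_pos (by linarith) hD)

def IsExactlyUniversal {X ι : Type*} [Fintype ι] {d : ℕ} (H : ι → X → Fin d) : Prop :=
  ∀ x x' : X, x ≠ x' → (#{i | H i x = H i x'} : ℝ) = Fintype.card ι / d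

lemma IsExactlyUniversal.sum_ite_eq {X ι : Type*} [Fintype ι] [Nonempty ι] [DecidableEq X]
    {d : ℕ} {H : ι → X → Fin d} (hH : IsExactlyUniversal H) {p q : ℝ}
    (hpq : p + (d - 1) * q = 1) (x' x : X) :
    ∑ i, 1 / (Fintype.card ι : ℝ) * (if H i x' = H i x then p else q)
      = if x' = x then p else 1 / d := by
  have hι : (Fintype.card ι : ℝ) ≠ 0 := by positivity
  have hd : (d : ℝ) ≠ 0 := by exact_mod_cast (H Classical.ofNonempty x).pos.ne'
  split_ifs with hx
  · simp [hx, hι]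
  · have hcard : (#{i | ¬ H i x' = H i x} : ℝ) = Fintype.card ι - #{i | H i x' = H i x} := by
      rw [eq_sub_iff_add_eq', ← card_univ]
      exact_mod_cast card_filter_add_card_filter_not _
    rw [← mul_sum, sum_ite, sum_const, sum_const, nsmul_eq_mul, nsmul_eq_mul, hcard,
      hH x' x hx]
    field_simp
    linear_combination hpq

section Report

variable {Ω ι X : Type*} [MeasurableSpace Ω] [MeasurableSpace ι] [MeasurableSingletonClass ι]
  {d : ℕ} {R : Ω → ι × Fin d}

lemma measurableSet_setOf_hash_eq [Finite ι] (H : ι → X → Fin d) (hR : Measurable R) (x : X) :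
    MeasurableSet {ω | H (R ω).1 x = (R ω).2} :=
  hR (Set.toFinite {z : ι × Fin d | H z.1 x = z.2}).measurableSet

lemma measureReal_setOf_hash_eq [Fintype ι] {μ : Measure Ω} [IsFiniteMeasure μ]
    (H : ι → X → Fin d) (hR : Measurable R) (x : X) :
    μ.real {ω | H (R ω).1 x = (R ω).2} = ∑ i, μ.real (R ⁻¹' {(i, H i x)}) := by
  let graph : ι ↪ ι × Fin d := ⟨fun i => (i, H i x), fun _ _ h => congrArg Prod.fst h⟩
  have hset : {ω | H (R ω).1 x = (R ω).2} = R ⁻¹' ↑(univ.map graph) := by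
    ext ω
    simp only [Set.mem_ofPred_eq, Set.mem_preimage, coe_map, coe_univ, Set.image_univ,
      Set.mem_range]
    exact ⟨fun h => ⟨(R ω).1, Prod.ext rfl h⟩, by rintro ⟨i, hi⟩; rw [← hi]; rfl⟩
  rw [hset, ← sum_measureReal_preimage_singleton _ fun z _ => hR (measurableSet_singleton z),
    sum_map]
  rfl

lemma measureReal_olh_support [Fintype ι] [DecidableEq X] {μ : Measure Ω}
    [IsProbabilityMeasure μ] {H : ι → X → Fin d} (hH : IsExactlyUniversal H) {p q : ℝ}
    (hp : 0 ≤ p) (hq : 0 ≤ q) (hpq : p + (d - 1) * q = 1) (hR : Measurable R) {x' : X}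
    (hlaw : ∀ i y, μ {ω | R ω = (i, y)}
      = ENNReal.ofReal (1 / (Fintype.card ι : ℝ) * (if H i x' = y then p else q)))
    (x : X) :
    μ.real {ω | H (R ω).1 x = (R ω).2} = if x' = x then p else 1 / d := by
  have : Nonempty ι := ⟨(R (nonempty_of_isProbabilityMeasure μ).some).1⟩
  rw [measureReal_setOf_hash_eq H hR x, ← hH.sum_ite_eq hpq x' x]
  refine sum_congr rfl fun i _ => ?_
  change (μ {ω | R ω = (i, H i x)}).toReal = _
  rw [hlaw, ENNReal.toReal_ofReal (mul_nonneg (by positivity) (by split_ifs <;> assumption))]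

end Report

lemma integral_card_filter_div_sub_div {Ω ι : Type*} [MeasurableSpace Ω] {μ : Measure Ω}
    [IsProbabilityMeasure μ] (s : Finset ι) {P : ι → Ω → Prop} [∀ j, DecidablePred (P j)]
    (hP : ∀ j, MeasurableSet {ω | P j ω}) (n a K : ℝ) :
    ∫ ω, ((#{j ∈ s | P j ω} : ℝ) / n - a) / K ∂μ
      = ((∑ j ∈ s, μ.real {ω | P j ω}) / n - a) / K := by
  have hind : ∀ j, Integrable ({ω | P j ω}.indicator 1) μ :=
    fun j => (integrable_const (1 : ℝ)).indicator (hP j)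
  have hcount : (fun ω => (#{j ∈ s | P j ω} : ℝ))
      = fun ω => ∑ j ∈ s, {ω | P j ω}.indicator (1 : Ω → ℝ) ω := by
    ext ω
    simp only [card_filter, Nat.cast_sum, Nat.cast_ite, Nat.cast_one, Nat.cast_zero,
      Set.indicator_apply, Set.mem_ofPred_eq, Pi.one_apply]
  have hint : Integrable (fun ω => (#{j ∈ s | P j ω} : ℝ)) μ := by
    rw [hcount]
    exact integrable_finsetSum _ fun j _ => hind j
  rw [integral_div, integral_sub (hint.div_const n) (integrable_const a), integral_div,
    integral_const, probReal_univ, one_smul, hcount, integral_finsetSum _ fun j _ => hind j]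
  simp_rw [integral_indicator_one (hP _)]

lemma sum_ite_div_card_sub_div_sub {ι : Type*} {s : Finset ι} (hs : s.Nonempty)
    (P : ι → Prop) [DecidablePred P] {p r : ℝ} (h : p - r ≠ 0) :
    ((∑ j ∈ s, if P j then p else r) / #s - r) / (p - r) = (#{j ∈ s | P j} : ℝ) / #s := by
  have hs0 : (#s : ℝ) ≠ 0 := by exact_mod_cast hs.card_pos.ne'
  have hcard : (#{j ∈ s | ¬ P j} : ℝ) = #s - #{j ∈ s | P j} := by
    rw [eq_sub_iff_add_eq']
    exact_mod_cast card_filter_add_card_filter_not P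
  rw [sum_ite, sum_const, sum_const, nsmul_eq_mul, nsmul_eq_mul, hcard]
  field_simp
  ring

theorem olh_estimator_unbiased_general {X ι : Type*} [Fintype ι] [DecidableEq X]
    [MeasurableSpace ι] [MeasurableSingletonClass ι]
    (ε : ℝ) (hε : 0 < ε) (d' : ℕ) (hd' : 2 ≤ d')
    (Hfam : ι → X → Fin d')
    (huniv : ∀ x x' : X, x ≠ x' →
      ((Finset.filter (fun i => Hfam i x = Hfam i x') Finset.univ).card : ℝ)
        = (Fintype.card ι : ℝ) / d')
    (p q : ℝ)
    (hp : p = Real.exp ε / ((d' : ℝ) - 1 + Real.exp ε))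
    (hq : q = 1 / ((d' : ℝ) - 1 + Real.exp ε))
    (n : ℕ) (hn : 0 < n) (xs : Fin n → X)
    {Ω : Type*} [MeasurableSpace Ω] (μ : Measure Ω) [IsProbabilityMeasure μ]
    (R : Fin n → Ω → ι × Fin d') (hmeas : ∀ j, Measurable (R j))
    (hdist : ∀ (j : Fin n) (i : ι) (y : Fin d'),
      μ {ω | R j ω = (i, y)}
        = ENNReal.ofReal
            ((1 / (Fintype.card ι : ℝ)) * (if Hfam i (xs j) = y then p else q)))
    (x : X) :
    ∫ ω, (((Finset.filter (fun j => Hfam (R j ω).1 x = (R j ω).2) Finset.univ).card : ℝ) / n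
            - 1 / d') / (p - 1 / d') ∂μ
      = ((Finset.filter (fun j => xs j = x) Finset.univ).card : ℝ) / n := by
  have hd : (1 : ℝ) < d' := by exact_mod_cast hd'
  have hD : 0 < (d' : ℝ) - 1 + Real.exp ε := by linarith [Real.exp_pos ε]
  have hpq : p + (d' - 1) * q = 1 := by
    rw [hp, hq]
    field_simp
    ring
  have hK : p - 1 / d' ≠ 0 := (hp ▸ exp_div_sub_one_div_pos hε hd).ne'
  have hsupport : ∀ j, μ.real {ω | Hfam (R j ω).1 x = (R j ω).2}
      = if xs j = x then p else 1 / d' := fun j =>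
    measureReal_olh_support huniv (hp ▸ div_nonneg (Real.exp_pos ε).le hD.le)
      (hq ▸ div_nonneg zero_le_one hD.le) hpq (hmeas j) (hdist j) x
  rw [integral_card_filter_div_sub_div _ fun j => measurableSet_setOf_hash_eq Hfam (hmeas j) x,
    sum_congr rfl fun j _ => hsupport j]
  simpa using sum_ite_div_card_sub_div_sub (univ_nonempty_iff.mpr ⟨⟨0, hn⟩⟩) (xs · = x) hK

/-- The OLH frequency estimator is unbiased: let `𝓗 = {Hfam i}` (indexed by the finite
nonempty type `ι`) be an exactly universal family of hash functions `X → Fin d'`, with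
`p = e^ε/(d' − 1 + e^ε)` and `q = 1/(d' − 1 + e^ε)`. Suppose `n` users holding values
`x_1, …, x_n` independently report pairs `(H_j, y_j)` produced by OLH (hash index chosen
uniformly, hash value perturbed by k-RR on `Fin d'`). Fix `x`; a report `(H_j, y_j)`
supports `x` when `H_j(x) = y_j`, `c_x` counts the supporting reports, and
`f_x = |{j : x_j = x}|/n`. Then `E[(c_x/n − 1/d')/(p − 1/d')] = f_x`. -/
theorem olh_estimator_unbiased {X ι : Type*} [Fintype ι] [Nonempty ι] [DecidableEq X]
    [MeasurableSpace ι] [MeasurableSingletonClass ι]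
    (ε : ℝ) (hε : 0 < ε) (d' : ℕ) (hd' : 2 ≤ d')
    (Hfam : ι → X → Fin d')
    (huniv : ∀ x x' : X, x ≠ x' →
      ((Finset.filter (fun i => Hfam i x = Hfam i x') Finset.univ).card : ℝ)
        = (Fintype.card ι : ℝ) / d')
    (p q : ℝ)
    (hp : p = Real.exp ε / ((d' : ℝ) - 1 + Real.exp ε))
    (hq : q = 1 / ((d' : ℝ) - 1 + Real.exp ε))
    (n : ℕ) (hn : 0 < n) (xs : Fin n → X)
    {Ω : Type*} [MeasurableSpace Ω] (μ : Measure Ω) [IsProbabilityMeasure μ]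
    (R : Fin n → Ω → ι × Fin d') (hmeas : ∀ j, Measurable (R j))
    (hindep : iIndepFun R μ)
    (hdist : ∀ (j : Fin n) (i : ι) (y : Fin d'),
      μ {ω | R j ω = (i, y)}
        = ENNReal.ofReal
            ((1 / (Fintype.card ι : ℝ)) * (if Hfam i (xs j) = y then p else q)))
    (x : X) :
    ∫ ω, (((Finset.filter (fun j => Hfam (R j ω).1 x = (R j ω).2) Finset.univ).card : ℝ) / n
            - 1 / d') / (p - 1 / d') ∂μ
      = ((Finset.filter (fun j => xs j = x) Finset.univ).card : ℝ) / n :=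
  olh_estimator_unbiased_general ε hε d' hd' Hfam huniv p q hp hq n hn xs μ R hmeas hdist x
end
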